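/- Let r > 0, α > 0, L ∈ ℕ, ω = 2πL, and let f : ℝ → ℝ be f(x) = (1 + cos(ωx/r))/(2ω^α). Let f̂ : ℝ → ℝ be continuous with finite crossing number Cr(ω^α f̂) < 2L. Then (1/(2r)) ∫_{−r}^{r} (f(x) − f̂(x))² dx ≥ (π/16) · (2L − Cr(ω^α f̂)) / ω^{2α+1}. -/

import Mathlib

open Real MeasureTheory

/-- Two reals `x, y` are on the same piece of the partition `I_g` iff the indicator
`𝟙(g ≥ 1/2)` is constant on the closed interval between them. The equivalence classes of
this relation are exactly the maximal intervals on which `𝟙(g ≥ 1/2)` is constant. -/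
def SameSide (g : ℝ → ℝ) (x y : ℝ) : Prop :=
  ∀ z ∈ Set.uIcc x y, ((1 / 2 : ℝ) ≤ g z ↔ (1 / 2 : ℝ) ≤ g x)

/-- The crossing number `Cr(g)`: the number of maximal intervals on which the indicator
`𝟙(g ≥ 1/2)` is constant, i.e. the number of equivalence classes of `SameSide g`
(`Nat.card` is `0` when there are infinitely many classes). -/
noncomputable def crossingNumber (g : ℝ → ℝ) : ℕ :=
  Nat.card (Quot (SameSide g))

/-!
Split `[-r, r]` into the `4L` half-periods of `cos (ω x / r)`. The function `ω^α f̂` crosses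
`1/2` between consecutive endpoints at most `Cr - 1` times, so on at least `4L + 1 - Cr`
half-periods it stays on one side of `1/2`. Each such half-period contains a quarter-period on
which `cos (ω x / r)` has the sign of `1 - 2 ω^α f̂`, and there
`|f - f̂| ≥ |cos (ω x / r)| / (2 ω^α)`; the integral of `cos²` over a quarter-period is
`π r / (4 ω)`. Altogether the mean square error is at least
`(π / 32) (4L + 1 - Cr) / ω^(2α+1)`, which exceeds the claimed bound.
-/

open Set Finset

namespace SameSide

variable {g : ℝ → ℝ} {a b c : ℝ}

theorem equivalence (g : ℝ → ℝ) : Equivalence (SameSide g) where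
  refl x z hz := by rw [Set.uIcc_self, mem_singleton_iff] at hz; rw [hz]
  symm {x y} h z hz := (h z (uIcc_comm x y ▸ hz)).trans (h y right_mem_uIcc).symm
  trans {x y w} h₁ h₂ z hz := by
    rcases uIcc_subset_uIcc_union_uIcc hz with hz | hz
    · exact h₁ z hz
    · exact (h₂ z hz).trans (h₁ y right_mem_uIcc)

theorem of_quot_mk_eq (h : Quot.mk (SameSide g) a = Quot.mk (SameSide g) b) : SameSide g a b :=
  (equivalence g).eqvGen_iff.1 (Quot.eqvGen_exact h)

theorem of_mem_uIcc (h : SameSide g a c) (hb : b ∈ uIcc a c) : SameSide g b c := fun z hz =>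
  (h z (uIcc_subset_uIcc_right hb hz)).trans (h b hb).symm

theorem forall_lt_or_forall_le (h : SameSide g a b) :
    (∀ x ∈ uIcc a b, g x < 1 / 2) ∨ (∀ x ∈ uIcc a b, 1 / 2 ≤ g x) := by
  by_cases ha : 1 / 2 ≤ g a
  · exact .inr fun x hx => (h x hx).2 ha
  · exact .inl fun x hx => lt_of_not_ge fun hx' => ha ((h x hx).1 hx')

end SameSide

open Classical in
theorem card_filter_not_sameSide_lt {g : ℝ → ℝ} [Finite (Quot (SameSide g))] {X : ℕ → ℝ}
    (hX : Monotone X) (n : ℕ) :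
    #{k ∈ range n | ¬ SameSide g (X k) (X (k + 1))} < crossingNumber g := by
  have := Fintype.ofFinite (Quot (SameSide g))
  set C := {k ∈ range n | ¬ SameSide g (X k) (X (k + 1))}
  -- `X 0` and the right endpoints `X (k + 1)` of the crossing steps lie in distinct classes.
  set T := insert 0 (C.map (addRightEmbedding 1))
  have hsep : ∀ i ∈ T, ∀ j ∈ T, i < j → ¬ SameSide g (X i) (X j) := by
    intro i _ j hj hij hside
    obtain ⟨k, hk, rfl⟩ : ∃ k ∈ C, k + 1 = j := by
      simpa using (mem_insert.1 hj).resolve_left (by omega)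
    exact (mem_filter.1 hk).2 (hside.of_mem_uIcc (mem_uIcc_of_le (hX (by omega)) (hX k.le_succ)))
  have hinj : Set.InjOn (fun i => Quot.mk (SameSide g) (X i)) T := by
    intro i hi j hj hij
    by_contra hne
    rcases lt_or_gt_of_ne hne with h | h
    · exact hsep i hi j hj h (SameSide.of_quot_mk_eq hij)
    · exact hsep j hj i hi h (SameSide.of_quot_mk_eq hij.symm)
  have := card_le_card_of_injOn _ (fun _ _ => mem_univ _) hinj
  rw [card_insert_of_notMem (by simp), card_map, card_univ] at this
  rw [crossingNumber, Nat.card_eq_fintype_card]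
  omega

theorem card_filter_mul_le_integral {φ : ℝ → ℝ} {X : ℕ → ℝ} {n : ℕ}
    (hint : ∀ k < n, IntervalIntegrable φ volume (X k) (X (k + 1))) (hφ : ∀ x, 0 ≤ φ x)
    (hX : Monotone X) {p : ℕ → Prop} [DecidablePred p] {m : ℝ}
    (hm : ∀ k, p k → m ≤ ∫ x in X k..X (k + 1), φ x) :
    #{k ∈ range n | p k} * m ≤ ∫ x in X 0..X n, φ x := by
  rw [← intervalIntegral.sum_integral_adjacent_intervals hint, ← nsmul_eq_mul, ← sum_const]
  calc ∑ _k ∈ range n with p _k, m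
      ≤ ∑ k ∈ range n with p k, ∫ x in X k..X (k + 1), φ x :=
        sum_le_sum fun k hk => hm k (mem_filter.1 hk).2
    _ ≤ ∑ k ∈ range n, ∫ x in X k..X (k + 1), φ x :=
        sum_le_sum_of_subset_of_nonneg (filter_subset _ _) fun k _ _ =>
          intervalIntegral.integral_nonneg (hX k.le_succ) fun x _ => hφ x

theorem integral_cos_sq_quarter (m : ℤ) :
    ∫ t in m * π / 2..m * π / 2 + π / 2, cos t ^ 2 = π / 4 := by
  have hcs : ∀ n : ℤ, cos (n * π / 2) * sin (n * π / 2) = 0 := fun n => by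
    have := sin_two_mul (n * π / 2)
    rw [show 2 * (n * π / 2) = n * π by ring, sin_int_mul_pi] at this
    linarith
  have := hcs (m + 1)
  push_cast at this
  rw [integral_cos_sq, show m * π / 2 + π / 2 = (m + 1) * π / 2 by ring, this, hcs m]
  ring

theorem exists_quarter_cos_mul_nonneg (j : ℤ) {d : ℝ → ℝ}
    (hd : (∀ t ∈ Icc (j * π) ((j + 1) * π), 0 ≤ d t) ∨
      (∀ t ∈ Icc (j * π) ((j + 1) * π), d t ≤ 0)) :
    ∃ m : ℤ, Icc (m * π / 2) (m * π / 2 + π / 2) ⊆ Icc (j * π) ((j + 1) * π) ∧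
      ∀ t ∈ Icc (m * π / 2) (m * π / 2 + π / 2), 0 ≤ cos t * d t := by
  have hpi := pi_pos
  have hcos : ∀ t, cos t = (-1) ^ j * cos (t - j * π) := fun t => by
    rw [← cos_add_int_mul_pi, sub_add_cancel]
  have hsign : (-1 : ℝ) ^ j = 1 ∨ (-1 : ℝ) ^ j = -1 :=
    (Int.even_or_odd j).imp Even.neg_one_zpow Odd.neg_one_zpow
  have hsub₁ :
      Icc (↑(2 * j) * π / 2) (↑(2 * j) * π / 2 + π / 2) ⊆ Icc (j * π) ((j + 1) * π) :=
    Icc_subset_Icc (by push_cast; linarith) (by push_cast; linarith)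
  have hsub₂ : Icc (↑(2 * j + 1) * π / 2) (↑(2 * j + 1) * π / 2 + π / 2) ⊆
      Icc (j * π) ((j + 1) * π) :=
    Icc_subset_Icc (by push_cast; linarith) (by push_cast; linarith)
  have hcos₁ : ∀ t ∈ Icc (↑(2 * j) * π / 2) (↑(2 * j) * π / 2 + π / 2),
      0 ≤ cos (t - j * π) := fun t ht => by
    push_cast at ht
    exact cos_nonneg_of_mem_Icc ⟨by linarith [ht.1], by linarith [ht.2]⟩
  have hcos₂ : ∀ t ∈ Icc (↑(2 * j + 1) * π / 2) (↑(2 * j + 1) * π / 2 + π / 2),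
      cos (t - j * π) ≤ 0 := fun t ht => by
    push_cast at ht
    exact cos_nonpos_of_pi_div_two_le_of_le (by linarith [ht.1]) (by linarith [ht.2])
  rcases hsign with hε | hε <;> rcases hd with hd | hd
  · refine ⟨2 * j, hsub₁, fun t ht => ?_⟩
    have := hcos₁ t ht; have := hd t (hsub₁ ht); rw [hcos, hε]; nlinarith
  · refine ⟨2 * j + 1, hsub₂, fun t ht => ?_⟩
    have := hcos₂ t ht; have := hd t (hsub₂ ht); rw [hcos, hε]; nlinarith
  · refine ⟨2 * j + 1, hsub₂, fun t ht => ?_⟩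
    have := hcos₂ t ht; have := hd t (hsub₂ ht); rw [hcos, hε]; nlinarith
  · refine ⟨2 * j, hsub₁, fun t ht => ?_⟩
    have := hcos₁ t ht; have := hd t (hsub₁ ht); rw [hcos, hε]; nlinarith

theorem pi_div_four_le_integral_sq_cos_add (j : ℤ) {d : ℝ → ℝ} (hd : Continuous d)
    (hsign : (∀ t ∈ Icc (j * π) ((j + 1) * π), 0 ≤ d t) ∨
      (∀ t ∈ Icc (j * π) ((j + 1) * π), d t ≤ 0)) :
    π / 4 ≤ ∫ t in j * π..(j + 1) * π, (cos t + d t) ^ 2 := by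
  obtain ⟨m, hsub, hprod⟩ := exists_quarter_cos_mul_nonneg j hsign
  have hpi := pi_pos
  have hQ : m * π / 2 ≤ m * π / 2 + π / 2 := by linarith
  calc π / 4 = ∫ t in m * π / 2..m * π / 2 + π / 2, cos t ^ 2 :=
        (integral_cos_sq_quarter m).symm
    _ ≤ ∫ t in m * π / 2..m * π / 2 + π / 2, (cos t + d t) ^ 2 :=
      intervalIntegral.integral_mono_on hQ ((by fun_prop : Continuous _).intervalIntegrable _ _)
        ((by fun_prop : Continuous _).intervalIntegrable _ _) fun t ht => by
        nlinarith [hprod t ht, sq_nonneg (d t)]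
    _ ≤ ∫ t in j * π..(j + 1) * π, (cos t + d t) ^ 2 :=
      intervalIntegral.integral_mono_interval (hsub ⟨le_rfl, hQ⟩).1 hQ (hsub ⟨hQ, le_rfl⟩).2
        (.of_forall fun t => sq_nonneg _) ((by fun_prop : Continuous _).intervalIntegrable _ _)

theorem pi_div_four_div_le_integral_sq_cos_mul_add {c : ℝ} (hc : 0 < c) (j : ℤ)
    {d : ℝ → ℝ} (hd : Continuous d)
    (hsign : (∀ x ∈ Icc (j * π / c) ((j + 1) * π / c), 0 ≤ d x) ∨
      (∀ x ∈ Icc (j * π / c) ((j + 1) * π / c), d x ≤ 0)) :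
    π / 4 / c ≤ ∫ x in j * π / c..(j + 1) * π / c, (cos (c * x) + d x) ^ 2 := by
  have hscale :
      ∀ t ∈ Icc (j * π) ((j + 1) * π), t / c ∈ Icc (j * π / c) ((j + 1) * π / c) :=
    fun t ht => ⟨by gcongr; exact ht.1, by gcongr; exact ht.2⟩
  have key := pi_div_four_le_integral_sq_cos_add j (d := fun t => d (t / c)) (by fun_prop)
    (hsign.imp (fun h t ht => h _ (hscale t ht)) (fun h t ht => h _ (hscale t ht)))
  have hsubst := intervalIntegral.integral_comp_mul_left (fun t => (cos t + d (t / c)) ^ 2)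
    hc.ne' (a := j * π / c) (b := (j + 1) * π / c)
  simp only [mul_div_cancel_left₀ _ hc.ne', mul_div_cancel₀ _ hc.ne'] at hsubst
  rw [hsubst, smul_eq_mul, inv_mul_eq_div]
  gcongr

theorem mul_le_integral_sq_cos_mul_add_one_sub {c : ℝ} (hc : 0 < c) {g : ℝ → ℝ}
    (hg : Continuous g) [Finite (Quot (SameSide g))] (a : ℤ) (n : ℕ) :
    (n + 1 - crossingNumber g) * (π / 4 / c) ≤
      ∫ x in a * π / c..(a + n) * π / c, (cos (c * x) + (1 - 2 * g x)) ^ 2 := by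
  classical
  have hpi := pi_pos
  set X : ℕ → ℝ := fun k => (a + k) * π / c
  have hX : Monotone X := fun i j hij => by simp only [X]; gcongr
  have hseg : ∀ k, SameSide g (X k) (X (k + 1)) →
      π / 4 / c ≤ ∫ x in X k..X (k + 1), (cos (c * x) + (1 - 2 * g x)) ^ 2 := fun k hk => by
    have hXk : X k = ↑(a + k : ℤ) * π / c := by simp only [X, Int.cast_add, Int.cast_natCast]
    have hXk' : X (k + 1) = (↑(a + k : ℤ) + 1) * π / c := by simp only [X]; push_cast; ring
    have hside := hk.forall_lt_or_forall_le
    rw [uIcc_of_le (hX k.le_succ), hXk, hXk'] at hside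
    rw [hXk, hXk']
    refine pi_div_four_div_le_integral_sq_cos_mul_add hc _ (by fun_prop) <|
      hside.imp (fun h x hx => ?_) (fun h x hx => ?_) <;> linarith [h x hx]
  have hcount := card_filter_not_sameSide_lt (g := g) hX n
  have hsum := card_filter_mul_le_integral (n := n)
    (fun k _ => (by fun_prop : Continuous _).intervalIntegrable _ _) (fun x => sq_nonneg _) hX hseg
  have hsplit := card_filter_add_card_filter_not (s := range n)
    (fun k => SameSide g (X k) (X (k + 1)))
  set S := {k ∈ range n | SameSide g (X k) (X (k + 1))}
  rw [card_range] at hsplit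
  have hcard : (n + 1 - crossingNumber g : ℝ) ≤ #S := by
    rw [sub_le_iff_le_add]
    exact_mod_cast (by omega : n + 1 ≤ #S + crossingNumber g)
  calc (n + 1 - crossingNumber g : ℝ) * (π / 4 / c) ≤ #S * (π / 4 / c) := by gcongr
    _ ≤ _ := by simpa [X] using hsum

theorem oscillation_lower_bound_general (r α : ℝ) (hr : 0 < r)
    (L : ℕ) (hL : 1 ≤ L) (ω : ℝ) (hω : ω = 2 * π * (L : ℝ))
    (f : ℝ → ℝ) (hf : ∀ x, f x = (1 + Real.cos (ω * x / r)) / (2 * ω ^ α))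
    (fhat : ℝ → ℝ) (hcont : Continuous fhat)
    (hfin : Finite (Quot (SameSide (fun x => ω ^ α * fhat x)))) :
    1 / (2 * r) * ∫ x in (-r)..r, (f x - fhat x) ^ 2 ≥
      π / 16 * ((2 * (L : ℝ) - (crossingNumber (fun x => ω ^ α * fhat x) : ℝ)) /
        ω ^ (2 * α + 1)) := by
  have hL' : (0 : ℝ) < L := by exact_mod_cast hL
  have hω0 : 0 < ω := by rw [hω]; positivity
  have hW : 0 < ω ^ α := rpow_pos_of_pos hω0 α
  have hpow : ω ^ (2 * α + 1) = (ω ^ α) ^ 2 * ω := by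
    rw [rpow_add hω0, rpow_one, mul_comm 2 α, rpow_mul hω0.le, rpow_two]
  have hdiff : ∀ x, (f x - fhat x) ^ 2 =
      (cos (ω / r * x) + (1 - 2 * (ω ^ α * fhat x))) ^ 2 / (2 * ω ^ α) ^ 2 := fun x => by
    rw [hf, show ω / r * x = ω * x / r by ring]
    field_simp
    ring
  have key := mul_le_integral_sq_cos_mul_add_one_sub (div_pos hω0 hr)
    (g := fun x => ω ^ α * fhat x) (by fun_prop) (-(2 * L)) (4 * L)
  have hleft : ((-(2 * L) : ℤ) : ℝ) * π / (ω / r) = -r := by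
    rw [hω]; push_cast; field_simp
  have hright : (((-(2 * L) : ℤ) : ℝ) + ((4 * L : ℕ) : ℝ)) * π / (ω / r) = r := by
    rw [hω]; push_cast; field_simp; ring
  rw [hleft, hright] at key
  set N := crossingNumber fun x => ω ^ α * fhat x
  calc π / 16 * ((2 * (L : ℝ) - N) / ω ^ (2 * α + 1))
      ≤ π / 16 * ((2 * L - N) / ((ω ^ α) ^ 2 * ω)) +
          (N + 1) * π / (32 * (ω ^ α) ^ 2 * ω) := by
        rw [hpow]; exact le_add_of_nonneg_right (by positivity)
    _ = 1 / (2 * r) *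
          ((((4 * L : ℕ) : ℝ) + 1 - N) * (π / 4 / (ω / r)) / (2 * ω ^ α) ^ 2) := by
        push_cast; field_simp; ring
    _ ≤ 1 / (2 * r) * ((∫ x in -r..r, (cos (ω / r * x) + (1 - 2 * (ω ^ α * fhat x))) ^ 2) /
          (2 * ω ^ α) ^ 2) := by gcongr
    _ = 1 / (2 * r) * ∫ x in -r..r, (f x - fhat x) ^ 2 := by
        simp only [hdiff, intervalIntegral.integral_div]

/-- **Oscillation lower bound.** Let `ω = 2πL`, `f(x) = (1 + cos(ωx/r))/(2ω^α)`, and let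
`f̂` be continuous with finite crossing number `Cr(ω^α f̂) < 2L`. Then
`(1/(2r)) ∫_{-r}^{r} (f - f̂)² ≥ (π/16) (2L - Cr(ω^α f̂)) / ω^{2α+1}`. -/
theorem oscillation_lower_bound (r α : ℝ) (hr : 0 < r) (hα : 0 < α)
    (L : ℕ) (hL : 1 ≤ L) (ω : ℝ) (hω : ω = 2 * π * (L : ℝ))
    (f : ℝ → ℝ) (hf : ∀ x, f x = (1 + Real.cos (ω * x / r)) / (2 * ω ^ α))
    (fhat : ℝ → ℝ) (hcont : Continuous fhat)
    (hfin : Finite (Quot (SameSide (fun x => ω ^ α * fhat x))))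
    (hcr : crossingNumber (fun x => ω ^ α * fhat x) < 2 * L) :
    1 / (2 * r) * ∫ x in (-r)..r, (f x - fhat x) ^ 2 ≥
      π / 16 * ((2 * (L : ℝ) - (crossingNumber (fun x => ω ^ α * fhat x) : ℝ)) /
        ω ^ (2 * α + 1)) :=
  oscillation_lower_bound_general r α hr L hL ω hω f hf fhat hcont hfin
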